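/- arXiv:2006.08195 — 6 statements merged into one kernel-verified Lean document; each statement's English description precedes it below -/
import Mathlib

section
/- For any depth-h feedforward ReLU network f (composition of affine maps and componentwise ReLU) and any unit vector u ∈ ℝ^{d1}, there exist a matrix W_u and vector b_u such that lim_{z→∞} ‖f(zu) - z·W_u u - b_u‖ = 0. -/
open Filter Matrix

/-- Componentwise ReLU. -/
def relu {d : ℕ} (v : Fin d → ℝ) : Fin d → ℝ := fun i => max (v i) 0

/-- A feedforward ReLU network of arbitrary depth: a composition of affine maps
with componentwise ReLU in between. -/
inductive ReLUNet : ℕ → ℕ → Type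
  | affine {d e : ℕ} (W : Matrix (Fin e) (Fin d) ℝ) (b : Fin e → ℝ) : ReLUNet d e
  | comp {d e k : ℕ} (outer : ReLUNet e k)
      (W : Matrix (Fin e) (Fin d) ℝ) (b : Fin e → ℝ) : ReLUNet d k

/-- Evaluation of a feedforward ReLU network. -/
def ReLUNet.eval : {d e : ℕ} → ReLUNet d e → (Fin d → ℝ) → (Fin e → ℝ)
  | _, _, .affine W b, x => W.mulVec x + b
  | _, _, .comp outer W b, x => outer.eval (relu (W.mulVec x + b))

lemma relu_net_eventually_affine : ∀ {d e : ℕ} (net : ReLUNet d e) (u w : Fin d → ℝ),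
    ∃ (v c : Fin e → ℝ), ∀ᶠ z : ℝ in atTop, net.eval (z • u + w) = z • v + c := by
  intro d e net
  induction net with
  | affine W b =>
    intro u w
    refine ⟨W.mulVec u, W.mulVec w + b, Filter.Eventually.of_forall fun z => ?_⟩
    simp [ReLUNet.eval, Matrix.mulVec_add, Matrix.mulVec_smul, add_assoc]
  | comp outer W b ih =>
    intro u w
    set a := W.mulVec u with ha
    set b' := W.mulVec w + b with hb'
    set u' : Fin _ → ℝ := fun i => if 0 < a i then a i else 0 with hu'
    set w' : Fin _ → ℝ := fun i => if 0 < a i then b' i else if a i = 0 then max (b' i) 0 else 0 with hw'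
    have hcoord : ∀ i, ∀ᶠ z : ℝ in atTop,
        max (z * a i + b' i) 0 = z * u' i + w' i := by
      intro i
      rcases lt_trichotomy (a i) 0 with h | h | h
      · filter_upwards [eventually_ge_atTop ((-b' i) / a i)] with z hz
        have : z * a i + b' i ≤ 0 := by
          have := (div_le_iff_of_neg h).mp hz
          nlinarith
        simp [hu', hw', not_lt.mpr h.le, h.ne, max_eq_right this]
      · refine Filter.Eventually.of_forall fun z => ?_
        simp [hu', hw', h]
      · filter_upwards [eventually_ge_atTop ((-b' i) / a i)] with z hz
        have : 0 ≤ z * a i + b' i := by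
          have := (div_le_iff₀ h).mp hz
          nlinarith
        simp [hu', hw', h, max_eq_left this]
    obtain ⟨v, c, hvc⟩ := ih u' w'
    refine ⟨v, c, ?_⟩
    have hall : ∀ᶠ z : ℝ in atTop, ∀ i, max (z * a i + b' i) 0 = z * u' i + w' i :=
      Filter.eventually_all.mpr hcoord
    filter_upwards [hvc, hall] with z hz hall'
    have hrelu : relu (W.mulVec (z • u + w) + b) = z • u' + w' := by
      funext i
      have : W.mulVec (z • u + w) + b = z • a + b' := by
        rw [ha, hb', Matrix.mulVec_add, Matrix.mulVec_smul, add_assoc]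
      rw [this]
      simpa [relu] using hall' i
    show outer.eval (relu (W.mulVec (z • u + w) + b)) = z • v + c
    rw [hrelu, hz]

/-- Any feedforward ReLU network converges to an affine function along the
ray in direction of any unit vector `u`. -/
theorem relu_network_extrapolation {d1 dout : ℕ} (net : ReLUNet d1 dout)
    (u : Fin d1 → ℝ) (hu : ‖u‖ = 1) :
    ∃ (Wu : Matrix (Fin dout) (Fin d1) ℝ) (bu : Fin dout → ℝ),
      Tendsto (fun z : ℝ => ‖net.eval (z • u) - z • Wu.mulVec u - bu‖) atTop (nhds 0) := by
  obtain ⟨v, c, hvc⟩ := relu_net_eventually_affine net u 0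
  have hu0 : u ≠ 0 := by
    intro h
    rw [h] at hu
    simp at hu
  set s : ℝ := ∑ j, u j * u j with hs
  have hspos : 0 < s := by
    have hsnn : 0 ≤ s := Finset.sum_nonneg fun j _ => mul_self_nonneg _
    rcases hsnn.lt_or_eq with h | h
    · exact h
    · exfalso
      apply hu0
      funext j
      have := (Finset.sum_eq_zero_iff_of_nonneg
        (fun j _ => mul_self_nonneg (u j))).mp h.symm j (Finset.mem_univ j)
      show u j = (0 : Fin d1 → ℝ) j
      simpa using mul_self_eq_zero.mp this
  refine ⟨Matrix.of fun i j => v i * u j / s, c, ?_⟩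
  have hmv : (Matrix.of fun i j => v i * u j / s).mulVec u = v := by
    funext i
    simp only [Matrix.mulVec, Matrix.of_apply, dotProduct]
    have : ∑ j, v i * u j / s * u j = (v i / s) * ∑ j, u j * u j := by
      rw [Finset.mul_sum]
      congr 1
      funext j
      ring
    rw [this, ← hs]
    field_simp
  rw [hmv]
  have : (fun z : ℝ => ‖net.eval (z • u) - z • v - c‖) =ᶠ[atTop] fun _ => (0 : ℝ) := by
    filter_upwards [hvc] with z hz
    have : net.eval (z • u) = z • v + c := by simpa using hz
    rw [this]
    simp [sub_sub]
  exact Tendsto.congr' this.symm tendsto_const_nhds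
end

section
/- For any feedforward network of arbitrary fixed depth with tanh activation and any unit vector u such that each preactivation in the first hidden layer has nonzero coefficient along u, there exists a constant vector v_u with lim_{z→∞} ‖f(zu) - v_u‖ = 0. -/
open Filter Matrix

/-- The layers of a tanh feedforward network after the first affine layer:
`A_h ∘ tanh ∘ A_{h-1} ∘ ⋯ ∘ tanh ∘ A_2 ∘ tanh`.  Together with an explicit first
affine layer `x ↦ W₁ x + b₁`, this represents a network of arbitrary depth. -/
inductive TanhTail : ℕ → ℕ → Type
  | affine {d e : ℕ} (W : Matrix (Fin e) (Fin d) ℝ) (b : Fin e → ℝ) : TanhTail d e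
  | comp {d e k : ℕ} (outer : TanhTail e k)
      (W : Matrix (Fin e) (Fin d) ℝ) (b : Fin e → ℝ) : TanhTail d k

/-- Evaluation: the input is passed through componentwise `tanh` before each affine layer. -/
noncomputable def TanhTail.eval : {d e : ℕ} → TanhTail d e → (Fin d → ℝ) → (Fin e → ℝ)
  | _, _, .affine W b, x => W.mulVec (fun i => Real.tanh (x i)) + b
  | _, _, .comp outer W b, x => outer.eval (W.mulVec (fun i => Real.tanh (x i)) + b)




lemma tanh_formula (x : ℝ) : Real.tanh x = 1 - 2 / (Real.exp (2 * x) + 1) := by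
  rw [Real.tanh_eq_sinh_div_cosh, Real.sinh_eq, Real.cosh_eq]
  have h1 : Real.exp x ≠ 0 := (Real.exp_pos x).ne'
  have h2 : Real.exp x + Real.exp (-x) ≠ 0 := by positivity
  have h3 : Real.exp (2 * x) + 1 ≠ 0 := by positivity
  have hx : Real.exp (2 * x) = Real.exp x * Real.exp x := by
    rw [← Real.exp_add]; ring_nf
  have hneg : Real.exp (-x) = (Real.exp x)⁻¹ := Real.exp_neg x
  field_simp [hx, hneg]
  have hE : Real.exp (-x) * Real.exp (x * 2) = Real.exp x := by
    rw [← Real.exp_add]; congr 1; ring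
  linear_combination (-2) * hE

lemma tendsto_tanh_atTop : Tendsto Real.tanh atTop (nhds 1) := by
  have h : Tendsto (fun x : ℝ => Real.exp (2 * x) + 1) atTop atTop :=
    ((Real.tendsto_exp_atTop.comp (tendsto_id.const_mul_atTop two_pos)).atTop_add
      tendsto_const_nhds)
  have h2 : Tendsto (fun x : ℝ => 1 - 2 / (Real.exp (2 * x) + 1)) atTop (nhds (1 - 0)) := by
    exact tendsto_const_nhds.sub (by simpa [div_eq_mul_inv] using (h.inv_tendsto_atTop.const_mul 2))
  simp only [sub_zero] at h2
  exact h2.congr fun x => (tanh_formula x).symm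

lemma tendsto_tanh_atBot : Tendsto Real.tanh atBot (nhds (-1)) := by
  have := (tendsto_tanh_atTop.comp tendsto_neg_atBot_atTop).neg
  simpa [Function.comp, Real.tanh_neg] using this

lemma continuous_tanh' : Continuous Real.tanh := by
  have h : ∀ x : ℝ, Real.tanh x = Real.sinh x / Real.cosh x := Real.tanh_eq_sinh_div_cosh
  simp only [funext h]
  exact Real.continuous_sinh.div Real.continuous_cosh fun x => (Real.cosh_pos x).ne'

lemma continuous_mulVec_add {d e : ℕ} (W : Matrix (Fin e) (Fin d) ℝ) (b : Fin e → ℝ) :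
    Continuous fun y : Fin d → ℝ => W.mulVec y + b := by
  refine Continuous.add ?_ continuous_const
  exact continuous_pi fun i => by
    simpa [Matrix.mulVec, dotProduct] using
      continuous_finset_sum Finset.univ fun j _ => (continuous_const.mul (continuous_apply j))

lemma continuous_tanh_pi {d : ℕ} :
    Continuous fun x : Fin d → ℝ => fun i => Real.tanh (x i) :=
  continuous_pi fun i => continuous_tanh'.comp (continuous_apply i)

lemma TanhTail.continuous_eval : ∀ {d e : ℕ} (t : TanhTail d e), Continuous t.eval
  | _, _, .affine W b => (continuous_mulVec_add W b).comp continuous_tanh_pi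
  | _, _, .comp outer W b =>
      outer.continuous_eval.comp ((continuous_mulVec_add W b).comp continuous_tanh_pi)

noncomputable def TanhTail.evalPost : {d e : ℕ} → TanhTail d e → (Fin d → ℝ) → (Fin e → ℝ)
  | _, _, .affine W b, t => W.mulVec t + b
  | _, _, .comp outer W b, t => outer.eval (W.mulVec t + b)

lemma TanhTail.tendsto_eval {d e : ℕ} (tail : TanhTail d e) {α : Type*} {l : Filter α}
    {x : α → Fin d → ℝ} {t : Fin d → ℝ}
    (h : Tendsto (fun z => fun i => Real.tanh (x z i)) l (nhds t)) :
    Tendsto (fun z => tail.eval (x z)) l (nhds (tail.evalPost t)) := by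
  cases tail with
  | affine W b =>
      exact ((continuous_mulVec_add W b).tendsto t).comp h
  | comp outer W b =>
      exact (outer.continuous_eval.tendsto _).comp (((continuous_mulVec_add W b).tendsto t).comp h)


/-- A tanh feedforward network of arbitrary depth `f(x) = A_h(tanh(⋯ tanh(A_1 x)⋯))`
converges to a constant vector along the ray in the direction of a unit vector `u`,
provided every first-layer preactivation has nonzero coefficient along `u`. -/
theorem tanh_network_extrapolation {d1 d2 dout : ℕ}
    (W1 : Matrix (Fin d2) (Fin d1) ℝ) (b1 : Fin d2 → ℝ)
    (tail : TanhTail d2 dout)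
    (u : Fin d1 → ℝ) (hu : ‖u‖ = 1)
    (hW1u : ∀ i, W1.mulVec u i ≠ 0)
    (f : ℝ → Fin dout → ℝ)
    (hf : ∀ z : ℝ, f z = tail.eval (W1.mulVec (z • u) + b1)) :
    ∃ vu : Fin dout → ℝ,
      Tendsto (fun z : ℝ => ‖f z - vu‖) atTop (nhds 0) := by
  set c : Fin d2 → ℝ := W1.mulVec u with hc
  set t : Fin d2 → ℝ := fun i => if 0 < c i then 1 else -1 with ht
  have hx : ∀ z i, (W1.mulVec (z • u) + b1) i = z * c i + b1 i := by
    intro z i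
    simp [Matrix.mulVec_smul, hc, smul_eq_mul, Pi.add_apply]
  have htanh : Tendsto (fun z : ℝ => fun i => Real.tanh ((W1.mulVec (z • u) + b1) i))
      atTop (nhds t) := by
    rw [tendsto_pi_nhds]
    intro i
    simp only [hx]
    rcases lt_or_gt_of_ne (hW1u i) with hneg | hpos
    · have hlin : Tendsto (fun z : ℝ => z * c i + b1 i) atTop atBot :=
        (tendsto_id.atTop_mul_const_of_neg hneg).atBot_add tendsto_const_nhds
      have := tendsto_tanh_atBot.comp hlin
      simpa [ht, not_lt.mpr hneg.le, Function.comp_def] using this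
    · have hlin : Tendsto (fun z : ℝ => z * c i + b1 i) atTop atTop :=
        (tendsto_id.atTop_mul_const hpos).atTop_add tendsto_const_nhds
      have := tendsto_tanh_atTop.comp hlin
      simpa [ht, hpos, Function.comp_def] using this
  have hmain : Tendsto f atTop (nhds (tail.evalPost t)) := by
    have := tail.tendsto_eval htanh
    exact this.congr fun z => (hf z).symm
  refine ⟨tail.evalPost t, ?_⟩
  have := (hmain.sub_const (tail.evalPost t)).norm
  simpa using this
end

section
/- Any function of the form zu ↦ z·W u + b (a ray restricted to direction u of an affine map with W u ≠ 0) is unbounded as z → ∞; consequently a ReLU feedforward network cannot converge to a nonconstant bounded periodic function f (i.e., ‖f_ReLU(zu) - f(zu)‖ does not tend to 0) unless W_u u = 0. -/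
open Filter Matrix

/-- Along a ray, an affine map `z ↦ z • Wᵤ u + bᵤ` with `Wᵤ u ≠ 0` is unbounded;
consequently a ReLU feedforward network (which extrapolates affinely, i.e.
`‖f_ReLU(zu) - z•Wᵤu - bᵤ‖ → 0`) cannot converge to a bounded nonconstant periodic
function `f` unless `Wᵤ u = 0`. -/
theorem relu_network_cannot_extrapolate_periodic
    {d1 dout : ℕ}
    (f : ℝ → Fin dout → ℝ) (L : ℝ) (hL : 0 < L)
    (hper : ∀ x : ℝ, f (x + L) = f x)
    (hbdd : ∃ C : ℝ, ∀ x : ℝ, ‖f x‖ ≤ C)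
    (hnonconst : ∃ x y : ℝ, f x ≠ f y)
    (u : Fin d1 → ℝ) (hu : ‖u‖ = 1)
    (fReLU : ℝ → Fin dout → ℝ)
    (Wu : Matrix (Fin dout) (Fin d1) ℝ) (bu : Fin dout → ℝ)
    (hextrap : Tendsto (fun z : ℝ => ‖fReLU z - z • Wu.mulVec u - bu‖) atTop (nhds 0)) :
    (Wu.mulVec u ≠ 0 → Tendsto (fun z : ℝ => ‖z • Wu.mulVec u + bu‖) atTop atTop) ∧
    (Tendsto (fun z : ℝ => ‖fReLU z - f z‖) atTop (nhds 0) → Wu.mulVec u = 0) := by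
  set v := Wu.mulVec u with hv
  have part1 : v ≠ 0 → Tendsto (fun z : ℝ => ‖z • v + bu‖) atTop atTop := by
    intro hvne
    have hvpos : 0 < ‖v‖ := norm_pos_iff.mpr hvne
    have hlin : Tendsto (fun z : ℝ => z * ‖v‖ - ‖bu‖) atTop atTop := by
      apply Tendsto.atTop_add _ tendsto_const_nhds
      exact Tendsto.atTop_mul_const hvpos tendsto_id
    refine tendsto_atTop_mono' atTop ?_ hlin
    filter_upwards [eventually_ge_atTop (0 : ℝ)] with z hz
    have h1 : ‖z • v‖ ≤ ‖z • v + bu‖ + ‖bu‖ := by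
      have := norm_add_le (z • v + bu) (-bu)
      simpa using this
    have h2 : ‖z • v‖ = z * ‖v‖ := by
      rw [norm_smul, Real.norm_eq_abs, abs_of_nonneg hz]
    linarith
  refine ⟨part1, ?_⟩
  intro hconv
  by_contra hvne
  obtain ⟨C, hC⟩ := hbdd
  have hub : Tendsto (fun z : ℝ =>
      ‖fReLU z - z • v - bu‖ + ‖fReLU z - f z‖ + C) atTop (nhds (0 + 0 + C)) :=
    ((hextrap.add hconv).add tendsto_const_nhds)
  have hle : ∀ z : ℝ, ‖z • v + bu‖ ≤
      ‖fReLU z - z • v - bu‖ + ‖fReLU z - f z‖ + C := by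
    intro z
    have : z • v + bu = -(fReLU z - z • v - bu) + (fReLU z - f z) + f z := by abel
    rw [this]
    calc ‖-(fReLU z - z • v - bu) + (fReLU z - f z) + f z‖
        ≤ ‖-(fReLU z - z • v - bu) + (fReLU z - f z)‖ + ‖f z‖ := norm_add_le _ _
      _ ≤ ‖-(fReLU z - z • v - bu)‖ + ‖fReLU z - f z‖ + ‖f z‖ := by
          exact add_le_add_left (norm_add_le _ _) _
      _ ≤ ‖fReLU z - z • v - bu‖ + ‖fReLU z - f z‖ + C := by
          rw [norm_neg]; exact add_le_add_right (hC z) _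
  have : Tendsto (fun z : ℝ =>
      ‖fReLU z - z • v - bu‖ + ‖fReLU z - f z‖ + C) atTop atTop :=
    tendsto_atTop_mono hle (part1 hvne)
  exact not_tendsto_atTop_of_tendsto_nhds hub this
end

section
/- If X is a standard normal random variable, then E[Snake_a(X)] = (1 - e^{-2a²})/(2a) for all a ≠ 0, and the second moment E[Snake_a(X)²] = 1 + (3 + e^{-8a²} - 4e^{-2a²})/(8a²). -/
open MeasureTheory ProbabilityTheory

noncomputable section

private lemma int_phi : Integrable (fun x : ℝ => Real.exp (-(1/2) * x ^ 2)) :=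
  integrable_exp_neg_mul_sq (by norm_num)

private lemma int_xphi : Integrable (fun x : ℝ => x * Real.exp (-(1/2) * x ^ 2)) :=
  integrable_mul_exp_neg_mul_sq (by norm_num)

private lemma int_x2phi : Integrable (fun x : ℝ => x ^ 2 * Real.exp (-(1/2) * x ^ 2)) := by
  have h := integrable_rpow_mul_exp_neg_mul_sq (b := 1/2) (by norm_num) (s := (2:ℝ)) (by norm_num)
  have h2 : ∀ x : ℝ, x ^ (2:ℝ) = x ^ 2 := fun x => by
    rw [show (2:ℝ) = ((2:ℕ):ℝ) by norm_num, Real.rpow_natCast]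
  simpa [h2] using h

private lemma int_cosphi (t : ℝ) :
    Integrable (fun x : ℝ => Real.cos (t * x) * Real.exp (-(1/2) * x ^ 2)) := by
  refine int_phi.mono' ?_ ?_
  · exact ((Real.continuous_cos.comp (continuous_const.mul continuous_id)).mul
      (Real.continuous_exp.comp (continuous_const.mul (continuous_pow 2)))).aestronglyMeasurable
  · filter_upwards with x
    rw [Real.norm_eq_abs, abs_mul, _root_.abs_of_nonneg (Real.exp_pos _).le]
    have := Real.abs_cos_le_one (t * x)
    nlinarith [Real.exp_pos (-(1/2) * x ^ 2)]

private lemma int_xcosphi (t : ℝ) :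
    Integrable (fun x : ℝ => x * Real.cos (t * x) * Real.exp (-(1/2) * x ^ 2)) := by
  refine int_xphi.norm.mono' ?_ ?_
  · exact ((continuous_id.mul (Real.continuous_cos.comp (continuous_const.mul continuous_id))).mul
      (Real.continuous_exp.comp (continuous_const.mul (continuous_pow 2)))).aestronglyMeasurable
  · filter_upwards with x
    rw [Real.norm_eq_abs, Real.norm_eq_abs, abs_mul, abs_mul, abs_mul,
      _root_.abs_of_nonneg (Real.exp_pos _).le]
    have h1 := Real.abs_cos_le_one (t * x)
    nlinarith [mul_nonneg (mul_nonneg (sub_nonneg.2 h1) (abs_nonneg x))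
      (Real.exp_pos (-(1/2) * x ^ 2)).le]

private lemma val_phi : ∫ x : ℝ, Real.exp (-(1/2) * x ^ 2) = Real.sqrt (2 * Real.pi) := by
  rw [show ∫ x : ℝ, Real.exp (-(1/2) * x ^ 2) = ∫ x : ℝ, Real.exp (-(1/2 : ℝ) * x ^ 2) from rfl,
    integral_gaussian]
  rw [show Real.pi / (1/2 : ℝ) = 2 * Real.pi by ring]

private lemma val_xphi : ∫ x : ℝ, x * Real.exp (-(1/2) * x ^ 2) = 0 := by
  have h := integral_neg_eq_self (fun x : ℝ => x * Real.exp (-(1/2) * x ^ 2)) volume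
  have he : (fun x : ℝ => (-x) * Real.exp (-(1/2) * (-x) ^ 2))
      = fun x : ℝ => -(x * Real.exp (-(1/2) * x ^ 2)) := by
    funext x; rw [neg_sq]; ring
  rw [he, integral_neg] at h
  linarith

private lemma val_x2phi :
    ∫ x : ℝ, x ^ 2 * Real.exp (-(1/2) * x ^ 2) = Real.sqrt (2 * Real.pi) := by
  have hderiv : ∀ x : ℝ, HasDerivAt (fun x : ℝ => x * Real.exp (-(1/2) * x ^ 2))
      (Real.exp (-(1/2) * x ^ 2) - x ^ 2 * Real.exp (-(1/2) * x ^ 2)) x := by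
    intro x
    have h1 : HasDerivAt (fun x : ℝ => -(1/2) * x ^ 2) (-(1/2) * (2 * x)) x := by
      simpa using (hasDerivAt_pow 2 x).const_mul (-(1/2) : ℝ)
    have h2 : HasDerivAt (fun y : ℝ => y * Real.exp (-(1/2) * y ^ 2))
        (1 * Real.exp (-(1/2) * x ^ 2) + x * (Real.exp (-(1/2) * x ^ 2) * (-(1/2) * (2 * x)))) x :=
      (hasDerivAt_id x).mul h1.exp
    convert h2 using 1
    ring
  have h0 := integral_eq_zero_of_hasDerivAt_of_integrable hderiv (int_phi.sub int_x2phi) int_xphi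
  rw [integral_sub int_phi int_x2phi, val_phi, sub_eq_zero] at h0
  exact h0.symm

private lemma val_cosphi (t : ℝ) :
    ∫ x : ℝ, Real.cos (t * x) * Real.exp (-(1/2) * x ^ 2)
      = Real.sqrt (2 * Real.pi) * Real.exp (-(1/2) * t ^ 2) := by
  have hb : ((-(1/2) : ℂ)).re < 0 := by norm_num
  have key := integral_cexp_quadratic hb (Complex.I * t) 0
  have hint := integrable_cexp_quadratic' hb (Complex.I * t) 0
  have hL : (fun x : ℝ => Real.cos (t * x) * Real.exp (-(1/2) * x ^ 2))
      = fun x : ℝ => (Complex.exp (-(1/2) * (x:ℂ) ^ 2 + Complex.I * t * x + 0)).re := by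
    funext x
    rw [Complex.exp_re]
    have hre : (-(1/2) * (x:ℂ) ^ 2 + Complex.I * t * x + 0).re = -(1/2) * x ^ 2 := by
      simp [Complex.add_re, Complex.mul_re, ← Complex.ofReal_pow]
    have him : (-(1/2) * (x:ℂ) ^ 2 + Complex.I * t * x + 0).im = t * x := by
      simp [Complex.add_im, Complex.mul_im, ← Complex.ofReal_pow]
    rw [hre, him, mul_comm]
  have hmid : ∫ x : ℝ, (Complex.exp (-(1/2) * (x:ℂ) ^ 2 + Complex.I * t * x + 0)).re
      = ((↑Real.pi / - -(1/2 : ℂ)) ^ (1/2 : ℂ)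
          * Complex.exp (0 - (Complex.I * t) ^ 2 / (4 * -(1/2)))).re := by
    rw [← key]
    exact integral_re hint
  rw [hL, hmid]
  have h1 : (↑Real.pi / - -(1/2 : ℂ)) = ((2 * Real.pi : ℝ) : ℂ) := by
    push_cast
    ring
  have h2 : (0 : ℂ) - (Complex.I * t) ^ 2 / (4 * -(1/2)) = ((-(1/2) * t ^ 2 : ℝ) : ℂ) := by
    rw [mul_pow, Complex.I_sq]
    push_cast
    ring
  rw [h1, h2, show ((1:ℂ)/2) = ((1/2 : ℝ) : ℂ) by norm_num,
    ← Complex.ofReal_cpow (by positivity), ← Complex.ofReal_exp, ← Complex.ofReal_mul,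
    Complex.ofReal_re, Real.sqrt_eq_rpow]

end

private lemma val_xcosphi (t : ℝ) :
    ∫ x : ℝ, x * Real.cos (t * x) * Real.exp (-(1/2) * x ^ 2) = 0 := by
  have h := integral_neg_eq_self
    (fun x : ℝ => x * Real.cos (t * x) * Real.exp (-(1/2) * x ^ 2)) volume
  have he : (fun x : ℝ => (-x) * Real.cos (t * (-x)) * Real.exp (-(1/2) * (-x) ^ 2))
      = fun x : ℝ => -(x * Real.cos (t * x) * Real.exp (-(1/2) * x ^ 2)) := by
    funext x
    rw [neg_sq, show t * (-x) = -(t * x) by ring, Real.cos_neg]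
    ring
  rw [he, integral_neg] at h
  linarith

private lemma gauss_int (g : ℝ → ℝ) :
    ∫ x, g x ∂(gaussianReal 0 1)
      = (Real.sqrt (2 * Real.pi))⁻¹ * ∫ x, g x * Real.exp (-(1/2) * x ^ 2) := by
  rw [gaussianReal_of_var_ne_zero 0 one_ne_zero]
  have hmeas : Measurable fun x => Real.toNNReal (gaussianPDFReal 0 1 x) :=
    (measurable_gaussianPDFReal 0 1).real_toNNReal
  rw [show (gaussianPDF 0 1)
      = (fun x => ((Real.toNNReal (gaussianPDFReal 0 1 x) : NNReal) : ENNReal)) from rfl]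
  rw [integral_withDensity_eq_integral_smul hmeas g]
  have hpt : ∀ x : ℝ, (Real.toNNReal (gaussianPDFReal 0 1 x)) • g x
      = (Real.sqrt (2 * Real.pi))⁻¹ * (g x * Real.exp (-(1/2) * x ^ 2)) := by
    intro x
    rw [NNReal.smul_def, Real.coe_toNNReal _ (gaussianPDFReal_nonneg 0 1 x), smul_eq_mul]
    rw [ProbabilityTheory.gaussianPDFReal]
    push_cast
    rw [show -(x - 0) ^ 2 / (2 * 1) = -(1/2) * x ^ 2 by ring]
    rw [mul_one]
    ring
  simp_rw [hpt]
  rw [integral_const_mul]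

/-- For a standard normal `X` and `a ≠ 0`, the mean of `Snake_a(X) = X + sin²(aX)/a`
is `(1 - e^{-2a²})/(2a)` and its second moment is `1 + (3 + e^{-8a²} - 4e^{-2a²})/(8a²)`. -/
theorem snake_gaussian_moments (a : ℝ) (ha : a ≠ 0) :
    (∫ x, (x + Real.sin (a * x) ^ 2 / a) ∂(gaussianReal 0 1)
        = (1 - Real.exp (-2 * a ^ 2)) / (2 * a)) ∧
    (∫ x, (x + Real.sin (a * x) ^ 2 / a) ^ 2 ∂(gaussianReal 0 1)
        = 1 + (3 + Real.exp (-8 * a ^ 2) - 4 * Real.exp (-2 * a ^ 2)) / (8 * a ^ 2)) := by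
  have hS : Real.sqrt (2 * Real.pi) ≠ 0 := by positivity
  have hsin : ∀ x : ℝ, Real.sin (a * x) ^ 2 = 1/2 - Real.cos (2 * a * x) / 2 := by
    intro x
    have h1 := Real.sin_sq_add_cos_sq (a * x)
    have h2 := Real.cos_two_mul (a * x)
    rw [show 2 * (a * x) = 2 * a * x by ring] at h2
    nlinarith [h1, h2]
  constructor
  · rw [gauss_int]
    have hpt : (fun x : ℝ => (x + Real.sin (a * x) ^ 2 / a) * Real.exp (-(1/2) * x ^ 2))
        = fun x : ℝ => x * Real.exp (-(1/2) * x ^ 2) + ((1/(2*a)) * Real.exp (-(1/2) * x ^ 2)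
            + (-(1/(2*a))) * (Real.cos (2 * a * x) * Real.exp (-(1/2) * x ^ 2))) := by
      funext x
      rw [hsin x]
      field_simp
      ring
    have k2 := int_phi.const_mul (1/(2*a))
    have k3 := (int_cosphi (2*a)).const_mul (-(1/(2*a)))
    have K2 : Integrable (fun x : ℝ => (1/(2*a)) * Real.exp (-(1/2) * x ^ 2) + (-(1/(2*a))) * (Real.cos (2 * a * x) * Real.exp (-(1/2) * x ^ 2))) := k2.add k3
    rw [hpt, integral_add int_xphi K2, integral_add k2 k3,
      integral_const_mul, integral_const_mul, val_xphi, val_phi, val_cosphi,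
      show -(1/2) * (2*a) ^ 2 = -2 * a ^ 2 by ring]
    field_simp
    ring
  · rw [gauss_int]
    have hpt : (fun x : ℝ => (x + Real.sin (a * x) ^ 2 / a) ^ 2 * Real.exp (-(1/2) * x ^ 2))
        = fun x : ℝ => x ^ 2 * Real.exp (-(1/2) * x ^ 2)
            + ((1/a) * (x * Real.exp (-(1/2) * x ^ 2))
            + ((-(1/a)) * (x * Real.cos (2 * a * x) * Real.exp (-(1/2) * x ^ 2))
            + ((3/(8*a^2)) * Real.exp (-(1/2) * x ^ 2)
            + ((-(1/(2*a^2))) * (Real.cos (2 * a * x) * Real.exp (-(1/2) * x ^ 2))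
            + (1/(8*a^2)) * (Real.cos (4 * a * x) * Real.exp (-(1/2) * x ^ 2)))))) := by
      funext x
      have hc4 := Real.cos_two_mul (2 * a * x)
      rw [show 2 * (2 * a * x) = 4 * a * x by ring] at hc4
      rw [hsin x, hc4]
      field_simp
      ring
    have h1 := int_x2phi
    have h2 := int_xphi.const_mul (1/a)
    have h3 := (int_xcosphi (2*a)).const_mul (-(1/a))
    have h4 := int_phi.const_mul (3/(8*a^2))
    have h5 := (int_cosphi (2*a)).const_mul (-(1/(2*a^2)))
    have h6 := (int_cosphi (4*a)).const_mul (1/(8*a^2))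
    have H2 : Integrable (fun x : ℝ => (1/a) * (x * Real.exp (-(1/2) * x ^ 2)) + ((-(1/a)) * (x * Real.cos (2 * a * x) * Real.exp (-(1/2) * x ^ 2)) + ((3/(8*a^2)) * Real.exp (-(1/2) * x ^ 2) + ((-(1/(2*a^2))) * (Real.cos (2 * a * x) * Real.exp (-(1/2) * x ^ 2)) + (1/(8*a^2)) * (Real.cos (4 * a * x) * Real.exp (-(1/2) * x ^ 2)))))) := h2.add (h3.add (h4.add (h5.add h6)))
    have H3 : Integrable (fun x : ℝ => (-(1/a)) * (x * Real.cos (2 * a * x) * Real.exp (-(1/2) * x ^ 2)) + ((3/(8*a^2)) * Real.exp (-(1/2) * x ^ 2) + ((-(1/(2*a^2))) * (Real.cos (2 * a * x) * Real.exp (-(1/2) * x ^ 2)) + (1/(8*a^2)) * (Real.cos (4 * a * x) * Real.exp (-(1/2) * x ^ 2))))) := h3.add (h4.add (h5.add h6))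
    have H4 : Integrable (fun x : ℝ => (3/(8*a^2)) * Real.exp (-(1/2) * x ^ 2) + ((-(1/(2*a^2))) * (Real.cos (2 * a * x) * Real.exp (-(1/2) * x ^ 2)) + (1/(8*a^2)) * (Real.cos (4 * a * x) * Real.exp (-(1/2) * x ^ 2)))) := h4.add (h5.add h6)
    have H5 : Integrable (fun x : ℝ => (-(1/(2*a^2))) * (Real.cos (2 * a * x) * Real.exp (-(1/2) * x ^ 2)) + (1/(8*a^2)) * (Real.cos (4 * a * x) * Real.exp (-(1/2) * x ^ 2))) := h5.add h6
    rw [hpt, integral_add h1 H2, integral_add h2 H3, integral_add h3 H4,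
      integral_add h4 H5, integral_add h5 h6,
      integral_const_mul, integral_const_mul, integral_const_mul, integral_const_mul,
      integral_const_mul, val_x2phi, val_xphi, val_xcosphi, val_phi, val_cosphi, val_cosphi,
      show -(1/2) * (2*a) ^ 2 = -2 * a ^ 2 by ring,
      show -(1/2) * (4*a) ^ 2 = -8 * a ^ 2 by ring]
    field_simp
    ring
end

section
/- For every m ≥ 1 and any target Fourier polynomial of order m with period 2L, there exists a one-hidden-layer network with Snake-type activation σ(t) = t + cos(t) and width 4m (plus an affine output layer) representing the Fourier polynomial exactly on all of ℝ. -/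
open Finset

/-- Any Fourier polynomial of order `m` with period `2L` is computed exactly on all of `ℝ`
by a one-hidden-layer network of width `4m` with Snake-type activation `σ(t) = t + cos t`
and an affine output layer. -/
theorem snake_network_represents_fourier_sum
    (m : ℕ) (hm : 1 ≤ m) (a0 : ℝ) (α β : Fin m → ℝ) (L : ℝ) (hL : 0 < L) :
    ∃ (w1 b1 w2 : Fin (4 * m) → ℝ) (b : ℝ),
      ∀ x : ℝ,
        b + ∑ i : Fin (4 * m), w2 i * ((w1 i * x + b1 i) + Real.cos (w1 i * x + b1 i))
          = a0 / 2 + ∑ k : Fin m,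
              (α k * Real.cos ((k + 1) * Real.pi * x / L)
                + β k * Real.sin ((k + 1) * Real.pi * x / L)) := by
  set π := Real.pi
  set c : Fin m → ℝ := fun k => (k + 1) * π / L with hc
  set e : Fin 4 × Fin m ≃ Fin (4 * m) := finProdFinEquiv
  set W1 : Fin 4 × Fin m → ℝ := fun p => ![c p.2, -c p.2, c p.2, -c p.2] p.1 with hW1
  set B1 : Fin 4 × Fin m → ℝ := fun p => ![0, 0, -(π/2), π/2] p.1 with hB1
  set W2 : Fin 4 × Fin m → ℝ := fun p => ![α p.2 / 2, α p.2 / 2, β p.2 / 2, β p.2 / 2] p.1 with hW2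
  refine ⟨W1 ∘ e.symm, B1 ∘ e.symm, W2 ∘ e.symm, a0 / 2, fun x => ?_⟩
  have hsum : ∑ i : Fin (4 * m),
      (W2 ∘ e.symm) i * (((W1 ∘ e.symm) i * x + (B1 ∘ e.symm) i)
        + Real.cos ((W1 ∘ e.symm) i * x + (B1 ∘ e.symm) i))
      = ∑ p : Fin 4 × Fin m,
      W2 p * ((W1 p * x + B1 p) + Real.cos (W1 p * x + B1 p)) := by
    exact Equiv.sum_comp e.symm fun p => W2 p * ((W1 p * x + B1 p) + Real.cos (W1 p * x + B1 p))
  simp only [Function.comp] at hsum ⊢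
  rw [hsum, Fintype.sum_prod_type_right]
  congr 1
  apply Finset.sum_congr rfl
  intro k _
  simp only [hW1, hB1, hW2, Fin.sum_univ_four, Matrix.cons_val_zero, Matrix.cons_val_one,
    Matrix.head_cons, Matrix.cons_val_two, Matrix.tail_cons, Matrix.cons_val_three]
  have h1 : Real.cos (-c k * x + 0) = Real.cos (c k * x + 0) := by
    rw [show -c k * x + 0 = -(c k * x + 0) by ring, Real.cos_neg]
  have h2 : Real.cos (c k * x + -(π/2)) = Real.sin (c k * x) := by
    rw [show c k * x + -(π/2) = c k * x - π/2 by ring, Real.cos_sub_pi_div_two]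
  have h3 : Real.cos (-c k * x + π/2) = Real.sin (c k * x) := by
    rw [show -c k * x + π/2 = π/2 - c k * x by ring, Real.cos_pi_div_two_sub]
  have h4 : Real.cos (c k * x + 0) = Real.cos ((k + 1) * π * x / L) := by
    rw [show c k * x + 0 = (k + 1) * π * x / L by rw [hc]; ring]
  have h5 : Real.sin (c k * x) = Real.sin ((k + 1) * π * x / L) := by
    rw [show c k * x = (k + 1) * π * x / L by rw [hc]; ring]
  rw [h1, h2, h3, h4, h5]
  ring
end

section
/- Let f: ℝ → ℝ be continuous and periodic with period 2L. Then for every ε > 0 there exists a one-hidden-layer neural network g with activation σ(t) = t + cos(t) such that |f(x) - g(x)| < ε for ALL x ∈ ℝ (uniform approximation on the whole real line, not just a compact set). -/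
open Finset

/-- A function is representable exactly by a one-hidden-layer snake network with zero bias. -/
private def SnakeRep (g : ℝ → ℝ) : Prop :=
  ∃ (N : ℕ) (w1 b1 w2 : Fin N → ℝ), ∀ x : ℝ,
    g x = ∑ i : Fin N, w2 i * ((w1 i * x + b1 i) + Real.cos (w1 i * x + b1 i))

private lemma snakeRep_zero : SnakeRep (fun _ => 0) :=
  ⟨0, ![], ![], ![], by simp⟩

private lemma snakeRep_add {g h : ℝ → ℝ} (hg : SnakeRep g) (hh : SnakeRep h) :
    SnakeRep (fun x => g x + h x) := by
  obtain ⟨N1, w1, b1, w2, h1⟩ := hg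
  obtain ⟨M1, v1, c1, v2, h2⟩ := hh
  refine ⟨N1 + M1, Fin.append w1 v1, Fin.append b1 c1, Fin.append w2 v2, fun x => ?_⟩
  rw [Fin.sum_univ_add]
  simp only [Fin.append_left, Fin.append_right]
  rw [h1 x, h2 x]

private lemma snakeRep_cos (a w φ : ℝ) :
    SnakeRep (fun x => a * Real.cos (w * x + φ)) := by
  refine ⟨2, ![w, -w], ![φ, -φ], ![a / 2, a / 2], fun x => ?_⟩
  rw [Fin.sum_univ_two]
  simp only [Matrix.cons_val_zero, Matrix.cons_val_one, Matrix.head_cons]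
  have h1 : -w * x + -φ = -(w * x + φ) := by ring
  rw [h1, Real.cos_neg]
  ring

private lemma snakeRep_sum {ι : Type*} (s : Finset ι) (G : ι → ℝ → ℝ)
    (h : ∀ i ∈ s, SnakeRep (G i)) : SnakeRep (fun x => ∑ i ∈ s, G i x) := by
  classical
  induction s using Finset.induction_on with
  | empty => simpa using snakeRep_zero
  | insert a s hnotmem ih =>
    simp only [Finset.sum_insert hnotmem]
    exact snakeRep_add (h a (Finset.mem_insert_self a s))
      (ih fun i hi => h i (Finset.mem_insert_of_mem hi))

/-- Universal extrapolation: any continuous periodic function on `ℝ` can be approximated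
uniformly on the whole real line by a one-hidden-layer network with Snake-type
activation `σ(t) = t + cos t`. -/
theorem snake_network_uniform_approximation_periodic
    (f : ℝ → ℝ) (L : ℝ) (hL : 0 < L) (hcont : Continuous f)
    (hper : ∀ x : ℝ, f (x + 2 * L) = f x) :
    ∀ ε > (0 : ℝ), ∃ (N : ℕ) (w1 b1 w2 : Fin N → ℝ) (b : ℝ),
      ∀ x : ℝ,
        |f x - (b + ∑ i : Fin N,
            w2 i * ((w1 i * x + b1 i) + Real.cos (w1 i * x + b1 i)))| < ε := by
  intro ε hε
  set T : ℝ := 2 * L with hTdef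
  have hT : 0 < T := by positivity
  haveI : Fact (0 < T) := ⟨hT⟩
  have hperi : Function.Periodic f T := hper
  have hliftc : Continuous hperi.lift := continuous_coinduced_dom.mpr hcont
  -- the complex-valued lift as a continuous map on the circle
  let F : C(AddCircle T, ℂ) := ⟨fun z => (hperi.lift z : ℂ), by fun_prop⟩
  have hmem : F ∈ closure ((Submodule.span ℂ (Set.range (@fourier T)) : Submodule ℂ _) : Set C(AddCircle T, ℂ)) := by
    have := span_fourier_closure_eq_top (T := T)
    rw [← Submodule.topologicalClosure_coe, this]
    trivial
  obtain ⟨g, hg, hdist⟩ := Metric.mem_closure_iff.mp hmem ε hε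
  obtain ⟨c, hc⟩ := Finsupp.mem_span_range_iff_exists_finsupp.mp hg
  -- g as a finite sum
  have hgsum : ∀ z : AddCircle T, g z = ∑ n ∈ c.support, c n * fourier n z := by
    intro z
    rw [← hc]
    rw [Finsupp.sum]
    simp [ContinuousMap.sum_apply]
  -- real part of g on ℝ is a sum of cosines
  have hre : ∀ x : ℝ, (g (x : AddCircle T)).re =
      ∑ n ∈ c.support, ((c n).re * Real.cos ((2 * Real.pi * n / T) * x + 0)
        + (-(c n).im) * Real.cos ((2 * Real.pi * n / T) * x + (-(Real.pi / 2)))) := by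
    intro x
    rw [hgsum, Complex.re_sum]
    refine Finset.sum_congr rfl fun n _ => ?_
    have hfour : (fourier n) (x : AddCircle T) =
        Complex.exp (((2 * Real.pi * n / T * x : ℝ) : ℂ) * Complex.I) := by
      rw [fourier_coe_apply]
      congr 1
      push_cast
      field_simp
    rw [hfour, Complex.mul_re, Complex.exp_ofReal_mul_I_re, Complex.exp_ofReal_mul_I_im]
    have h2 : 2 * Real.pi * n / T * x + -(Real.pi / 2) = 2 * Real.pi * n / T * x - Real.pi / 2 := by
      ring
    rw [h2, Real.cos_sub_pi_div_two]
    ring_nf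
  -- this sum of cosines is a snake network
  have hrep : SnakeRep (fun x => (g (x : AddCircle T)).re) := by
    have : SnakeRep (fun x => ∑ n ∈ c.support,
        ((c n).re * Real.cos ((2 * Real.pi * n / T) * x + 0)
        + (-(c n).im) * Real.cos ((2 * Real.pi * n / T) * x + (-(Real.pi / 2))))) := by
      refine snakeRep_sum _ _ fun n _ => ?_
      exact snakeRep_add (snakeRep_cos _ _ _) (snakeRep_cos _ _ _)
    obtain ⟨N, w1, b1, w2, hN⟩ := this
    exact ⟨N, w1, b1, w2, fun x => (hre x).trans (hN x)⟩
  obtain ⟨N, w1, b1, w2, hN⟩ := hrep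
  refine ⟨N, w1, b1, w2, 0, fun x => ?_⟩
  rw [zero_add, ← hN x]
  have key : f x - (g (x : AddCircle T)).re = (F (x : AddCircle T) - g (x : AddCircle T)).re := by
    simp only [Complex.sub_re, F]
    simp [ContinuousMap.coe_mk, Function.Periodic.lift_coe]
  rw [key]
  calc |(F (x : AddCircle T) - g (x : AddCircle T)).re|
      ≤ ‖F (x : AddCircle T) - g (x : AddCircle T)‖ := Complex.abs_re_le_norm _
    _ = dist (F (x : AddCircle T)) (g (x : AddCircle T)) := by
        rw [Complex.dist_eq]
    _ ≤ dist F g := ContinuousMap.dist_apply_le_dist _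
    _ < ε := hdist
end
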